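/- Let d ≥ 1 be an integer and let t_{-d} < t_{-d+1} < ⋯ < t_{2d+1} be strictly increasing real numbers. Suppose the two vectors c = (c_{-d}, …, c_d) and c' = (c'_{-d}, …, c'_d) both satisfy, for every δ = 0, …, 2d and every x ∈ ℝ, the identity ∑_{γ=-d}^{d} c_γ ∫_ℝ B(t | t_{γ:γ+d+1}) (x − t)^δ dt = x^δ (respectively with c'). Then c = c'; i.e., the optimal SIAC convolution coefficients are unique. -/

import Mathlib

/-!
Swapping the divided difference with the integral, and using the Beta integral
`∫₀ᵘ s^m (u - s)^n ds = β(m, n) u^(m+n+1)` with `β(m, n) = ∫₀¹ y^m (1 - y)^n dy > 0`, gives the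
moment formula `∫ B(s | t_{i:i+n+1}) s^m ds = (t_{i+n+1} - t_i) β(m, n) Δ[t_{i:i+n+1}] u^(m+n+1)`.
So, taking `x = 0`, the difference of two solutions gives numbers
`a_γ = (c_γ - c'_γ)(t_{γ+d+1} - t_γ)` with `∑_γ a_γ Δ[t_{γ:γ+d+1}] P = 0` for every monomial, hence
every polynomial `P` of degree `≤ 3d + 1` (up to degree `d` each divided difference vanishes).
The polynomial `∏_{l > γ} (X - t_l)` kills every window right of `γ` and is nonzero only at the left
knot of the window at `γ`, so by induction on `γ` all `a_γ` vanish.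
-/

open MeasureTheory

/-- Divided difference `Δ[t_i, ..., t_j] h`, defined recursively:
`Δ[t_i] h = h (t i)` and
`Δ[t_{i:j}] h = (Δ[t_{i+1:j}] h - Δ[t_{i:j-1}] h) / (t j - t i)` for `i < j`. -/
noncomputable def dd (t : ℤ → ℝ) (h : ℝ → ℝ) (i j : ℤ) : ℝ :=
  if _hij : i < j then
    (dd t h (i + 1) j - dd t h i (j - 1)) / (t j - t i)
  else h (t i)
termination_by (j - i).toNat
decreasing_by
  · omega
  · omega

/-- B-spline of degree `j - i - 1` with knots `t i, ..., t j`: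
`B(x | t_{i:j}) = (t_j - t_i) · Δ[t_{i:j}] (max (· - x) 0)^(j-i-1)`. -/
noncomputable def bspline (t : ℤ → ℝ) (i j : ℤ) (x : ℝ) : ℝ :=
  (t j - t i) * dd t (fun u => (max (u - x) 0) ^ (j - i - 1).toNat) i j

open Polynomial Set

section DividedDifference

variable (t : ℤ → ℝ)

theorem dd_of_lt (h : ℝ → ℝ) {i j : ℤ} (hij : i < j) :
    dd t h i j = (dd t h (i + 1) j - dd t h i (j - 1)) / (t j - t i) := by
  rw [dd, dif_pos hij]

theorem dd_of_not_lt (h : ℝ → ℝ) {i j : ℤ} (hij : ¬i < j) : dd t h i j = h (t i) := by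
  rw [dd, dif_neg hij]

theorem dd_congr {h h' : ℝ → ℝ} {i j : ℤ} (hij : i ≤ j)
    (hh : ∀ l ∈ Icc i j, h (t l) = h' (t l)) : dd t h i j = dd t h' i j := by
  rcases hij.lt_or_eq with hlt | rfl
  · rw [dd_of_lt t h hlt, dd_of_lt t h' hlt,
      dd_congr (by omega) fun l hl => hh l ⟨by linarith [hl.1], hl.2⟩,
      dd_congr (by omega) fun l hl => hh l ⟨hl.1, by linarith [hl.2]⟩]
  · rw [dd_of_not_lt t h (lt_irrefl i), dd_of_not_lt t h' (lt_irrefl i)]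
    exact hh i ⟨le_rfl, le_rfl⟩
termination_by (j - i).toNat

theorem dd_zero (i j : ℤ) : dd t (fun _ => 0) i j = 0 := by
  by_cases hij : i < j
  · rw [dd_of_lt t _ hij, dd_zero, dd_zero, sub_self, zero_div]
  · rw [dd_of_not_lt t _ hij]
termination_by (j - i).toNat

theorem dd_add (f g : ℝ → ℝ) (i j : ℤ) :
    dd t (fun u => f u + g u) i j = dd t f i j + dd t g i j := by
  by_cases hij : i < j
  · rw [dd_of_lt t _ hij, dd_of_lt t f hij, dd_of_lt t g hij, dd_add, dd_add]; ring
  · rw [dd_of_not_lt t _ hij, dd_of_not_lt t f hij, dd_of_not_lt t g hij]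
termination_by (j - i).toNat

theorem dd_const_mul (a : ℝ) (f : ℝ → ℝ) (i j : ℤ) :
    dd t (fun u => a * f u) i j = a * dd t f i j := by
  by_cases hij : i < j
  · rw [dd_of_lt t _ hij, dd_of_lt t f hij, dd_const_mul, dd_const_mul]; ring
  · rw [dd_of_not_lt t _ hij, dd_of_not_lt t f hij]
termination_by (j - i).toNat

theorem dd_sub (f g : ℝ → ℝ) (i j : ℤ) :
    dd t (fun u => f u - g u) i j = dd t f i j - dd t g i j := by
  simp only [sub_eq_add_neg, ← neg_one_mul (g _), dd_add, dd_const_mul]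
  ring

theorem dd_sum {α : Type*} (s : Finset α) (f : α → ℝ → ℝ) (i j : ℤ) :
    dd t (fun u => ∑ n ∈ s, f n u) i j = ∑ n ∈ s, dd t (f n) i j := by
  classical
  induction s using Finset.induction with
  | empty => simpa using dd_zero t i j
  | insert a s ha ih => simp only [Finset.sum_insert ha, dd_add, ih]

theorem dd_const (a : ℝ) {i j : ℤ} (hij : i < j) : dd t (fun _ => a) i j = 0 := by
  rw [dd_of_lt t _ hij]
  by_cases hij' : i + 1 < j
  · rw [dd_const a hij', dd_const a (by omega : i < j - 1), sub_self, zero_div]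
  · rw [dd_of_not_lt t _ hij', dd_of_not_lt t _ (by omega : ¬i < j - 1), sub_self, zero_div]
termination_by (j - i).toNat

theorem dd_eq_zero_of_eq_zero {h : ℝ → ℝ} {i j : ℤ} (hij : i ≤ j)
    (hh : ∀ l ∈ Icc i j, h (t l) = 0) : dd t h i j = 0 :=
  (dd_congr t hij hh).trans (dd_zero t i j)

theorem dd_sub_mul (g : ℝ → ℝ) {i j : ℤ} (hij : i < j) (ht : InjOn t (Icc i j)) :
    dd t (fun u => (u - t i) * g u) i j = dd t g (i + 1) j := by
  have hne : ∀ {a b}, a ∈ Icc i j → b ∈ Icc i j → a < b → t b - t a ≠ 0 := fun ha hb hab =>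
    sub_ne_zero.mpr (ht.ne hb ha hab.ne')
  have hji := hne ⟨le_rfl, hij.le⟩ ⟨hij.le, le_rfl⟩ hij
  rw [dd_of_lt t _ hij]
  by_cases hij' : i + 1 < j
  · have hshift : dd t (fun u => (u - t i) * g u) (i + 1) j
        = dd t g (i + 1 + 1) j + (t (i + 1) - t i) * dd t g (i + 1) j := by
      rw [← dd_sub_mul g hij' (ht.mono (Icc_subset_Icc (by omega) le_rfl)), ← dd_const_mul,
        ← dd_add]
      congr 1; funext u; ring
    have hj1 := hne ⟨by omega, hij'.le⟩ ⟨hij.le, le_rfl⟩ hij'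
    have hrec : dd t g (i + 1 + 1) j - dd t g (i + 1) (j - 1)
        = (t j - t (i + 1)) * dd t g (i + 1) j := by
      rw [dd_of_lt t g hij']; field_simp
    rw [hshift, dd_sub_mul g (by omega : i < j - 1) (ht.mono (Icc_subset_Icc le_rfl (by omega))),
      div_eq_iff hji]
    linear_combination hrec
  · obtain rfl : j = i + 1 := by omega
    simp only [dd_of_not_lt t _ (lt_irrefl _), add_sub_cancel_right, sub_self, zero_mul, sub_zero]
    field_simp
termination_by (j - i).toNat

theorem dd_eval_eq_zero (P : ℝ[X]) {i j : ℤ} (hP : (P.natDegree : ℤ) < j - i)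
    (ht : InjOn t (Icc i j)) : dd t (fun u => P.eval u) i j = 0 := by
  have hij : i < j := by omega
  rcases Nat.eq_zero_or_pos P.natDegree with h0 | hpos
  · rw [eq_C_of_natDegree_eq_zero h0]
    simpa using dd_const t _ hij
  set Q := P /ₘ (X - C (t i))
  have hPQ : ∀ u, P.eval u = P.eval (t i) + (u - t i) * Q.eval u := fun u => by
    conv_lhs => rw [← modByMonic_add_div P (X - C (t i))]
    simp [Q, modByMonic_X_sub_C_eq_C_eval]
  have hQ : Q.natDegree = P.natDegree - 1 := by
    simp [Q, natDegree_divByMonic P (monic_X_sub_C (t i))]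
  rw [funext hPQ, dd_add, dd_const t _ hij, dd_sub_mul t _ hij ht, zero_add]
  exact dd_eval_eq_zero Q (by omega) (ht.mono (Icc_subset_Icc (by omega) le_rfl))
termination_by (j - i).toNat

theorem dd_pow_eq_zero {N : ℕ} {i j : ℤ} (hN : (N : ℤ) < j - i)
    (ht : InjOn t (Icc i j)) : dd t (fun u => u ^ N) i j = 0 := by
  simpa using dd_eval_eq_zero t (X ^ N) (by simpa using hN) ht

theorem dd_eval_eq_sum (P : ℝ[X]) (i j : ℤ) :
    dd t (fun u => P.eval u) i j
      = ∑ N ∈ Finset.range (P.natDegree + 1), P.coeff N * dd t (fun u => u ^ N) i j := by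
  simp_rw [eval_eq_sum_range, dd_sum, dd_const_mul]

theorem dd_eq_mul_prod_of_eq_zero {h : ℝ → ℝ} {i j : ℤ} (hij : i ≤ j)
    (hh : ∀ l ∈ Ioc i j, h (t l) = 0) :
    dd t h i j = h (t i) * ∏ l ∈ Finset.Ioc i j, (t i - t l)⁻¹ := by
  rcases hij.lt_or_eq with hlt | rfl
  · have hright : dd t h (i + 1) j = 0 :=
      dd_eq_zero_of_eq_zero t (by omega) fun l hl => hh l ⟨by linarith [hl.1], hl.2⟩
    have hleft := dd_eq_mul_prod_of_eq_zero (by omega : i ≤ j - 1)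
      fun l hl => hh l ⟨hl.1, by linarith [hl.2]⟩
    have hIoc : Finset.Ioc i j = insert j (Finset.Ioc i (j - 1)) := by
      ext a; simp only [Finset.mem_Ioc, Finset.mem_insert]; omega
    rw [dd_of_lt t h hlt, hright, hleft, hIoc, Finset.prod_insert (by simp), div_eq_mul_inv,
      ← neg_sub (t i), inv_neg]
    ring
  · simp [dd_of_not_lt t h (lt_irrefl i)]
termination_by (j - i).toNat

theorem integrable_dd {μ : Measure ℝ} (F : ℝ → ℝ → ℝ) {i j : ℤ} (hij : i ≤ j)
    (hF : ∀ l ∈ Icc i j, Integrable (F (t l)) μ) :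
    Integrable (fun s => dd t (fun u => F u s) i j) μ := by
  rcases hij.lt_or_eq with hlt | rfl
  · simp only [dd_of_lt t _ hlt]
    exact ((integrable_dd F (by omega) fun l hl => hF l ⟨by linarith [hl.1], hl.2⟩).sub
      (integrable_dd F (by omega) fun l hl => hF l ⟨hl.1, by linarith [hl.2]⟩)).div_const _
  · simpa only [dd_of_not_lt t _ (lt_irrefl i)] using hF i ⟨le_rfl, le_rfl⟩
termination_by (j - i).toNat

theorem integral_dd {μ : Measure ℝ} (F : ℝ → ℝ → ℝ) {i j : ℤ} (hij : i ≤ j)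
    (hF : ∀ l ∈ Icc i j, Integrable (F (t l)) μ) :
    ∫ s, dd t (fun u => F u s) i j ∂μ = dd t (fun u => ∫ s, F u s ∂μ) i j := by
  rcases hij.lt_or_eq with hlt | rfl
  · have hF₁ : ∀ l ∈ Icc (i + 1) j, Integrable (F (t l)) μ :=
      fun l hl => hF l ⟨by linarith [hl.1], hl.2⟩
    have hF₂ : ∀ l ∈ Icc i (j - 1), Integrable (F (t l)) μ :=
      fun l hl => hF l ⟨hl.1, by linarith [hl.2]⟩
    simp only [dd_of_lt t _ hlt]
    rw [integral_div, integral_sub (integrable_dd t F (by omega) hF₁)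
      (integrable_dd t F (by omega) hF₂), integral_dd F (by omega) hF₁,
      integral_dd F (by omega) hF₂]
  · simp only [dd_of_not_lt t _ (lt_irrefl i)]
termination_by (j - i).toNat

theorem intervalIntegral_dd (F : ℝ → ℝ → ℝ) {i j : ℤ} (hij : i ≤ j) {a b : ℝ}
    (hF : ∀ l ∈ Icc i j, IntervalIntegrable (F (t l)) volume a b) :
    ∫ s in a..b, dd t (fun u => F u s) i j = dd t (fun u => ∫ s in a..b, F u s) i j := by
  simp only [intervalIntegral]
  rw [integral_dd t F hij fun l hl => (hF l hl).1, integral_dd t F hij fun l hl => (hF l hl).2,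
    dd_sub]

end DividedDifference

noncomputable def betaNat (m n : ℕ) : ℝ := ∫ y in (0 : ℝ)..1, y ^ m * (1 - y) ^ n

theorem betaNat_pos (m n : ℕ) : 0 < betaNat m n :=
  intervalIntegral.intervalIntegral_pos_of_pos_on
    ((by fun_prop : Continuous fun y : ℝ => y ^ m * (1 - y) ^ n).intervalIntegrable 0 1)
    (fun y hy => mul_pos (pow_pos hy.1 m) (pow_pos (sub_pos.mpr hy.2) n)) zero_lt_one

theorem integral_pow_mul_sub_pow (m n : ℕ) (u : ℝ) :
    ∫ s in (0 : ℝ)..u, s ^ m * (u - s) ^ n = betaNat m n * u ^ (m + n + 1) := by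
  have hsub := intervalIntegral.mul_integral_comp_mul_left (a := 0) (b := 1) u
    (f := fun s => s ^ m * (u - s) ^ n)
  have hscale : ∀ y, (u * y) ^ m * (u - u * y) ^ n = u ^ (m + n) * (y ^ m * (1 - y) ^ n) :=
    fun y => by rw [← mul_one_sub, mul_pow, mul_pow]; ring
  rw [mul_zero, mul_one] at hsub
  simp only [hscale, intervalIntegral.integral_const_mul] at hsub
  rw [← hsub, betaNat]
  ring

theorem integral_pow_mul_max_sub_pow (m : ℕ) {n : ℕ} (hn : n ≠ 0) {a b u : ℝ} (hau : a ≤ u)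
    (hub : u ≤ b) :
    ∫ s in a..b, s ^ m * max (u - s) 0 ^ n
      = betaNat m n * u ^ (m + n + 1) - ∫ s in (0 : ℝ)..a, s ^ m * (u - s) ^ n := by
  have hcont : Continuous fun s => s ^ m * max (u - s) 0 ^ n := by fun_prop
  have hright : ∫ s in u..b, s ^ m * max (u - s) 0 ^ n = 0 := by
    refine (intervalIntegral.integral_congr fun s hs => ?_).trans intervalIntegral.integral_zero
    rw [uIcc_of_le hub] at hs
    simp only [max_eq_right (sub_nonpos.mpr hs.1), zero_pow hn, mul_zero]
  have hleft : ∫ s in a..u, s ^ m * max (u - s) 0 ^ n = ∫ s in a..u, s ^ m * (u - s) ^ n := by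
    refine intervalIntegral.integral_congr fun s hs => ?_
    rw [uIcc_of_le hau] at hs
    simp only [max_eq_left (sub_nonneg.mpr hs.2)]
  have hpoly : Continuous fun s => s ^ m * (u - s) ^ n := by fun_prop
  rw [← intervalIntegral.integral_add_adjacent_intervals (hcont.intervalIntegrable a u)
    (hcont.intervalIntegrable u b), hright, add_zero, hleft,
    ← intervalIntegral.integral_interval_sub_left (hpoly.intervalIntegrable 0 u)
      (hpoly.intervalIntegrable 0 a), integral_pow_mul_sub_pow]

section BSpline

variable (t : ℤ → ℝ) (i : ℤ) (n : ℕ)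

theorem bspline_eq (s : ℝ) :
    bspline t i (i + (n + 1)) s
      = (t (i + (n + 1)) - t i) * dd t (fun u => max (u - s) 0 ^ n) i (i + (n + 1)) := by
  simp only [bspline, add_sub_cancel_left, add_sub_cancel_right, Int.toNat_natCast]

theorem bspline_eq_zero_of_le (ht : StrictMonoOn t (Icc i (i + (n + 1)))) {s : ℝ}
    (hs : s ≤ t i) : bspline t i (i + (n + 1)) s = 0 := by
  have hpoly : ∀ l ∈ Icc i (i + (n + 1)),
      max (t l - s) 0 ^ n = ((X - C s) ^ n).eval (t l) := fun l hl => by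
    have := ht.monotoneOn ⟨le_rfl, by omega⟩ hl hl.1
    rw [max_eq_left (by linarith)]
    simp
  rw [bspline_eq, dd_congr t (h' := fun u => ((X - C s) ^ n).eval u) (by omega) hpoly,
    dd_eval_eq_zero t _ (by simp) ht.injOn, mul_zero]

theorem bspline_eq_zero_of_ge (hn : n ≠ 0) (ht : MonotoneOn t (Icc i (i + (n + 1)))) {s : ℝ}
    (hs : t (i + (n + 1)) ≤ s) : bspline t i (i + (n + 1)) s = 0 := by
  rw [bspline_eq]
  refine mul_eq_zero_of_right _ (dd_eq_zero_of_eq_zero t (by omega) fun l hl => ?_)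
  have := ht hl ⟨by omega, le_rfl⟩ hl.2
  rw [max_eq_right (by linarith), zero_pow hn]


theorem integral_bspline_mul_pow (hn : n ≠ 0) (ht : StrictMonoOn t (Icc i (i + (n + 1))))
    (m : ℕ) :
    ∫ s, bspline t i (i + (n + 1)) s * s ^ m
      = (t (i + (n + 1)) - t i) * betaNat m n
          * dd t (fun u => u ^ (m + n + 1)) i (i + (n + 1)) := by
  set j := i + (n + 1)
  have hij : i ≤ j := by omega
  have hknot : ∀ l ∈ Icc i j, t i ≤ t l ∧ t l ≤ t j := fun l hl =>
    ⟨ht.monotoneOn ⟨le_rfl, hij⟩ hl hl.1, ht.monotoneOn hl ⟨hij, le_rfl⟩ hl.2⟩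
  have hsupp : ∀ s ∉ Ioc (t i) (t j), bspline t i j s * s ^ m = 0 := by
    intro s hs
    rw [mem_Ioc, not_and_or, not_lt, not_le] at hs
    rcases hs with hs | hs
    · rw [bspline_eq_zero_of_le t i n ht hs, zero_mul]
    · rw [bspline_eq_zero_of_ge t i n hn ht.monotoneOn hs.le, zero_mul]
  have hB : ∀ s, bspline t i j s = (t j - t i) * dd t (fun u => max (u - s) 0 ^ n) i j :=
    bspline_eq t i n
  have hcont : ∀ u : ℝ, Continuous fun s => s ^ m * max (u - s) 0 ^ n := fun u => by fun_prop
  have hpoly : ∀ s, dd t (fun u => s ^ m * (u - s) ^ n) i j = 0 := fun s => by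
    rw [dd_const_mul]
    refine mul_eq_zero_of_right _ ?_
    have hX : (fun u => (u - s) ^ n) = fun u => ((X - C s) ^ n).eval u := by
      funext u; simp
    rw [hX, dd_eval_eq_zero t _ (by simp [j]) ht.injOn]
  calc ∫ s, bspline t i j s * s ^ m
      = ∫ s in t i..t j, bspline t i j s * s ^ m := by
        rw [intervalIntegral.integral_of_le (hknot j ⟨hij, le_rfl⟩).1,
          setIntegral_eq_integral_of_forall_compl_eq_zero hsupp]
    _ = (t j - t i) * ∫ s in t i..t j, dd t (fun u => s ^ m * max (u - s) 0 ^ n) i j := by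
        simp only [hB, dd_const_mul, ← intervalIntegral.integral_const_mul]
        congr 1; funext s; ring
    _ = (t j - t i) * dd t (fun u => ∫ s in t i..t j, s ^ m * max (u - s) 0 ^ n) i j := by
        rw [intervalIntegral_dd t _ hij fun l _ => (hcont _).intervalIntegrable _ _]
    _ = (t j - t i) * dd t (fun u => betaNat m n * u ^ (m + n + 1)
          - ∫ s in (0 : ℝ)..t i, s ^ m * (u - s) ^ n) i j := by
        rw [dd_congr t (h' := fun u => betaNat m n * u ^ (m + n + 1)
            - ∫ s in (0 : ℝ)..t i, s ^ m * (u - s) ^ n) hij fun l hl =>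
          integral_pow_mul_max_sub_pow m hn (hknot l hl).1 (hknot l hl).2]
    _ = (t j - t i) * betaNat m n * dd t (fun u => u ^ (m + n + 1)) i j := by
        rw [dd_sub, dd_const_mul, ← intervalIntegral_dd t _ hij fun l _ =>
          (by fun_prop : Continuous fun s => s ^ m * (t l - s) ^ n).intervalIntegrable _ _]
        simp only [hpoly, intervalIntegral.integral_zero]
        ring

theorem sum_mul_dd_pow_eq_zero_of_sum_moment_eq_zero {ι : Type*} (s : Finset ι) (e : ι → ℝ)
    (w : ι → ℤ) {n : ℕ} (hn : n ≠ 0) (ht : ∀ γ ∈ s, StrictMonoOn t (Icc (w γ) (w γ + (n + 1))))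
    {M : ℕ} (h : ∀ m ≤ M, ∑ γ ∈ s, e γ * ∫ x, bspline t (w γ) (w γ + (n + 1)) x * x ^ m = 0) :
    ∀ N ≤ M + (n + 1), ∑ γ ∈ s, e γ * (t (w γ + (n + 1)) - t (w γ))
      * dd t (fun u => u ^ N) (w γ) (w γ + (n + 1)) = 0 := by
  intro N hN
  rcases le_or_gt N n with hNn | hnN
  · exact Finset.sum_eq_zero fun γ hγ =>
      mul_eq_zero_of_right _ (dd_pow_eq_zero t (by omega) (ht γ hγ).injOn)
  obtain ⟨m, rfl⟩ : ∃ m, N = m + n + 1 := ⟨N - n - 1, by omega⟩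
  have hscaled : betaNat m n * ∑ γ ∈ s, e γ * (t (w γ + (n + 1)) - t (w γ))
      * dd t (fun u => u ^ (m + n + 1)) (w γ) (w γ + (n + 1)) = 0 := by
    rw [Finset.mul_sum, ← h m (by omega)]
    refine Finset.sum_congr rfl fun γ hγ => ?_
    rw [integral_bspline_mul_pow t _ n hn (ht γ hγ)]
    ring
  exact (mul_eq_zero.mp hscaled).resolve_left (betaNat_pos m n).ne'

end BSpline

section Independence

variable (t : ℤ → ℝ)

theorem sum_mul_dd_eval_eq_zero {ι : Type*} (s : Finset ι) (a : ι → ℝ) (I J : ι → ℤ) {M : ℕ}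
    (h : ∀ N ≤ M, ∑ γ ∈ s, a γ * dd t (fun u => u ^ N) (I γ) (J γ) = 0) (P : ℝ[X])
    (hP : P.natDegree ≤ M) :
    ∑ γ ∈ s, a γ * dd t (fun u => P.eval u) (I γ) (J γ) = 0 := by
  simp_rw [dd_eval_eq_sum, Finset.mul_sum]
  rw [Finset.sum_comm]
  refine Finset.sum_eq_zero fun N hN => ?_
  simp_rw [mul_left_comm (a _), ← Finset.mul_sum]
  rw [h N (by rw [Finset.mem_range] at hN; omega), mul_zero]

theorem eq_zero_of_sum_mul_dd_eval_eq_zero (p : ℤ) (m k : ℕ) (ht : InjOn t (Icc (-p) (m + k - p)))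
    (a : Fin (m + 1) → ℝ)
    (h : ∀ P : ℝ[X], P.natDegree ≤ m + k →
      ∑ γ : Fin (m + 1), a γ * dd t (fun u => P.eval u) (γ - p) (γ - p + k) = 0) :
    a = 0 := by
  suffices h0 : ∀ r, a r = 0 from funext h0
  intro r
  induction r using WellFoundedLT.induction with
  | _ r ih =>
  have hr := r.isLt
  set P : ℝ[X] := ∏ l ∈ Finset.Ioc ((r : ℤ) - p) (m + k - p), (X - C (t l))
  have hPdeg : P.natDegree ≤ m + k := by
    rw [natDegree_prod_of_monic _ _ fun l _ => monic_X_sub_C (t l)]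
    simp only [natDegree_X_sub_C, Finset.sum_const, smul_eq_mul, mul_one, Int.card_Ioc]
    omega
  have hPzero : ∀ l ∈ Ioc ((r : ℤ) - p) (m + k - p), P.eval (t l) = 0 := fun l hl => by
    rw [eval_prod]
    exact Finset.prod_eq_zero (Finset.mem_Ioc.mpr hl) (by simp)
  have hne : ∀ l ∈ Ioc ((r : ℤ) - p) (m + k - p), t (r - p) - t l ≠ 0 := fun l hl =>
    sub_ne_zero.mpr (ht.ne ⟨by omega, by omega⟩ ⟨by linarith [hl.1], hl.2⟩ (by linarith [hl.1]))
  have hsum := h P hPdeg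
  rw [Finset.sum_eq_single r ?_ (by simp)] at hsum
  · rw [dd_eq_mul_prod_of_eq_zero t (by omega)
      fun l hl => hPzero l ⟨hl.1, by linarith [hl.2]⟩] at hsum
    refine (mul_eq_zero.mp hsum).resolve_right (mul_ne_zero ?_ ?_)
    · rw [eval_prod, Finset.prod_ne_zero_iff]
      intro l hl
      simpa using hne l (Finset.mem_Ioc.mp hl)
    · rw [Finset.prod_ne_zero_iff]
      intro l hl
      exact inv_ne_zero (hne l ⟨(Finset.mem_Ioc.mp hl).1, by linarith [(Finset.mem_Ioc.mp hl).2]⟩)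
  · intro γ _ hγr
    rcases hγr.lt_or_gt with hlt | hgt
    · rw [ih γ hlt, zero_mul]
    · have hγ := γ.isLt
      refine mul_eq_zero_of_right _ (dd_eq_zero_of_eq_zero t (by omega) fun l hl => hPzero l ?_)
      exact ⟨by linarith [hl.1, Fin.lt_def.mp hgt], by linarith [hl.2]⟩

end Independence

/-- Uniqueness of the optimal SIAC convolution coefficients: if both
`c` and `c'` satisfy `∑_γ c_γ ∫ B(t | t_{γ:γ+d+1}) (x - t)^δ dt = x^δ` for every
`δ = 0..2d` and every `x ∈ ℝ`, then `c = c'`. -/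
theorem stmt2 (d : ℕ) (hd : 1 ≤ d) (t : ℤ → ℝ)
    (ht : ∀ i : ℤ, -(d : ℤ) ≤ i → i < 2 * d + 1 → t i < t (i + 1))
    (c c' : Fin (2 * d + 1) → ℝ)
    (hc : ∀ (δ : Fin (2 * d + 1)) (x : ℝ),
      ∑ γ : Fin (2 * d + 1), c γ *
        ∫ s : ℝ, bspline t (((γ : ℕ) : ℤ) - d) ((((γ : ℕ) : ℤ) - d) + (d + 1)) s *
          (x - s) ^ (δ : ℕ) = x ^ (δ : ℕ))
    (hc' : ∀ (δ : Fin (2 * d + 1)) (x : ℝ),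
      ∑ γ : Fin (2 * d + 1), c' γ *
        ∫ s : ℝ, bspline t (((γ : ℕ) : ℤ) - d) ((((γ : ℕ) : ℤ) - d) + (d + 1)) s *
          (x - s) ^ (δ : ℕ) = x ^ (δ : ℕ)) :
    c = c' := by
  have hmono : StrictMonoOn t (Icc (-(d : ℤ)) (2 * d + 1)) :=
    strictMonoOn_of_lt_succ ordConnected_Icc fun i _ hi hi1 => by
      simpa using ht i hi.1 (by simpa using hi1.2)
  set w : Fin (2 * d + 1) → ℤ := fun γ => ((γ : ℕ) : ℤ) - d
  have hwin : ∀ γ, StrictMonoOn t (Icc (w γ) (w γ + (d + 1))) := fun γ => by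
    simp only [w]
    exact hmono.mono (Icc_subset_Icc (by omega) (by omega))
  have hmoment : ∀ δ ≤ 2 * d,
      ∑ γ, (c γ - c' γ) * ∫ s, bspline t (w γ) (w γ + (d + 1)) s * s ^ δ = 0 := by
    intro δ hδ
    have hneg : ∀ f : ℝ → ℝ, ∫ s, f s * (0 - s) ^ δ = (-1) ^ δ * ∫ s, f s * s ^ δ := fun f => by
      rw [← integral_const_mul]
      congr 1 with s
      rw [zero_sub, neg_pow, mul_left_comm]
    have hdiff := congrArg₂ (· - ·) (hc ⟨δ, by omega⟩ 0) (hc' ⟨δ, by omega⟩ 0)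
    simp only [hneg, sub_self, ← Finset.sum_sub_distrib, ← sub_mul] at hdiff
    simp only [mul_left_comm _ ((-1 : ℝ) ^ δ), ← Finset.mul_sum] at hdiff
    exact (mul_eq_zero.mp hdiff).resolve_left (pow_ne_zero _ (by norm_num))
  set a : Fin (2 * d + 1) → ℝ := fun γ => (c γ - c' γ) * (t (w γ + (d + 1)) - t (w γ))
  have ha : a = 0 :=
    eq_zero_of_sum_mul_dd_eval_eq_zero t d (2 * d) (d + 1)
      (hmono.injOn.mono (Icc_subset_Icc le_rfl (by push_cast; omega))) a fun P hP => by
        push_cast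
        exact sum_mul_dd_eval_eq_zero t _ a _ _ (sum_mul_dd_pow_eq_zero_of_sum_moment_eq_zero t _
          _ w (by omega) (fun γ _ => hwin γ) hmoment) P hP
  funext γ
  have hlen : t (w γ + (d + 1)) - t (w γ) ≠ 0 :=
    (sub_pos.mpr (hwin γ ⟨le_rfl, by omega⟩ ⟨by omega, le_rfl⟩ (by omega))).ne'
  simpa [a, hlen, sub_eq_zero] using congrFun ha γ
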